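/- Let ν > 0, let d ≥ 1 be an integer, and let θ ∈ ℝ^d with S := Σ_{i=1}^d |θ_i|^ν > 0. Define Ψ(λ) := (1/2) log(νd/4) − log λ − log π(θ|λ) for λ > 0 (this is Ψ(λ) = −log( π(θ|λ)/E(λ)^{1/2} ) with E(λ) = νd/(4λ²)). Then Ψ attains a unique global minimum on (0,∞), at λ* = (d+2)^{2/ν} / ( ν^{2/ν} η(ν)² S^{2/ν} ), and the second derivative of Ψ at the minimizer equals Ψ''(λ*) = ν(d+2)/(4 (λ*)²). -/

import Mathlib

open MeasureTheory

/-- `η(ν) = (Γ(3/ν)/Γ(1/ν))^{1/2}`. -/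
noncomputable def ggdEta (ν : ℝ) : ℝ :=
  Real.sqrt (Real.Gamma (3 / ν) / Real.Gamma (1 / ν))

/-- The generalized Gaussian density
`π_{λ,ν}(θ) = (ν η(ν)/(2Γ(1/ν))) λ^{1/2} exp(−(η(ν) λ^{1/2} |θ|)^ν)`. -/
noncomputable def ggd (ν lam θ : ℝ) : ℝ :=
  ν * ggdEta ν / (2 * Real.Gamma (1 / ν)) * Real.sqrt lam *
    Real.exp (-((ggdEta ν * Real.sqrt lam * |θ|) ^ ν))

/-!
Taking logarithms, `Ψ(λ) = K - (d/2 + 1) log λ + η^ν S λ^{ν/2}` on `(0, ∞)`. Any function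
`K - a log x + b x^c` with `a, c > 0` has its only critical point where `b c x^c = a`; writing
`x^c = x₀^c e^{c s}` with `s = log x - log x₀`, the inequality `e^{cs} > 1 + cs` shows that this
point is the strict global minimum, and there the second derivative collapses to `a c / x₀²`.
-/

open Real Filter

section LogRpowPotential

variable {a b c x₀ : ℝ}

theorem log_rpow_potential_lt (ha : 0 < a) (hc : 0 < c) (hx₀ : 0 < x₀)
    (hcrit : b * c * x₀ ^ c = a) (K : ℝ) {x : ℝ} (hx : 0 < x) (hne : x ≠ x₀) :
    K - a * log x₀ + b * x₀ ^ c < K - a * log x + b * x ^ c := by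
  set s := log x - log x₀
  have hcs : c * s ≠ 0 :=
    mul_ne_zero hc.ne' (sub_ne_zero.mpr fun h => hne (log_injOn_pos hx hx₀ h))
  have hx_rpow : x ^ c = x₀ ^ c * exp (c * s) := by
    rw [rpow_def_of_pos hx, rpow_def_of_pos hx₀, ← exp_add]
    congr 1
    ring
  have hbx₀ : b * x₀ ^ c = a / c := by
    rw [eq_div_iff hc.ne']
    linear_combination hcrit
  have hexp := mul_lt_mul_of_pos_left (add_one_lt_exp hcs) (div_pos ha hc)
  rw [hx_rpow, ← mul_assoc, hbx₀]
  have : a / c * (c * s + 1) = a * log x - a * log x₀ + a / c := by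
    field_simp
    ring
  linarith

theorem hasDerivAt_log_rpow_potential (K : ℝ) {x : ℝ} (hx : 0 < x) :
    HasDerivAt (fun y => K - a * log y + b * y ^ c) (-a / x + b * c * x ^ (c - 1)) x := by
  have h : HasDerivAt (fun y => K - a * log y + b * y ^ c)
      (0 - a * x⁻¹ + b * (c * x ^ (c - 1))) x :=
    ((hasDerivAt_const x K).sub ((hasDerivAt_log hx.ne').const_mul a)).add
      ((hasDerivAt_rpow_const (p := c) (Or.inl hx.ne')).const_mul b)
  exact h.congr_deriv (by ring)

theorem deriv_deriv_log_rpow_potential {f : ℝ → ℝ} {K : ℝ}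
    (hf : ∀ x, 0 < x → f x = K - a * log x + b * x ^ c) (hx₀ : 0 < x₀)
    (hcrit : b * c * x₀ ^ c = a) :
    deriv (deriv f) x₀ = a * c / x₀ ^ 2 := by
  have hderiv : ∀ x, 0 < x → deriv f x = -a * x⁻¹ + b * c * x ^ (c - 1) := fun x hx => by
    have hfx : f =ᶠ[nhds x] fun y => K - a * log y + b * y ^ c :=
      eventuallyEq_of_mem (Ioi_mem_nhds hx) hf
    rw [hfx.deriv_eq, (hasDerivAt_log_rpow_potential K hx).deriv, neg_div, div_eq_mul_inv,
      neg_mul]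
  have hf' : deriv f =ᶠ[nhds x₀] fun y => -a * y⁻¹ + b * c * y ^ (c - 1) :=
    eventuallyEq_of_mem (Ioi_mem_nhds hx₀) hderiv
  have h : HasDerivAt (fun y => -a * y⁻¹ + b * c * y ^ (c - 1))
      (-a * -(x₀ ^ 2)⁻¹ + b * c * ((c - 1) * x₀ ^ (c - 1 - 1))) x₀ :=
    ((hasDerivAt_inv hx₀.ne').const_mul (-a)).add
      ((hasDerivAt_rpow_const (p := c - 1) (Or.inl hx₀.ne')).const_mul (b * c))
  rw [hf'.deriv_eq, h.deriv]
  have hpow : x₀ ^ (c - 1 - 1) = x₀ ^ c / x₀ ^ 2 := by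
    rw [show c - 1 - 1 = c - ((2 : ℕ) : ℝ) by push_cast; ring, rpow_sub hx₀, rpow_natCast]
  rw [hpow]
  field_simp
  linear_combination (c - 1) * hcrit

end LogRpowPotential

section GeneralizedGaussian

variable {ν : ℝ}

theorem ggdEta_pos (hν : 0 < ν) : 0 < ggdEta ν :=
  sqrt_pos.mpr (div_pos (Gamma_pos_of_pos (by positivity)) (Gamma_pos_of_pos (by positivity)))

theorem ggd_normalizer_pos (hν : 0 < ν) : 0 < ν * ggdEta ν / (2 * Gamma (1 / ν)) := by
  have := ggdEta_pos hν
  have : 0 < Gamma (1 / ν) := Gamma_pos_of_pos (by positivity)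
  positivity

theorem ggd_pos (hν : 0 < ν) {lam : ℝ} (hlam : 0 < lam) (t : ℝ) : 0 < ggd ν lam t := by
  have := ggd_normalizer_pos hν
  unfold ggd
  positivity

theorem log_ggd (hν : 0 < ν) {lam : ℝ} (hlam : 0 < lam) (t : ℝ) :
    log (ggd ν lam t) = log (ν * ggdEta ν / (2 * Gamma (1 / ν))) + log lam / 2 -
      ggdEta ν ^ ν * lam ^ (ν / 2) * |t| ^ ν := by
  have hη := ggdEta_pos hν
  have hpow : (ggdEta ν * sqrt lam * |t|) ^ ν = ggdEta ν ^ ν * lam ^ (ν / 2) * |t| ^ ν := by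
    rw [mul_rpow (by positivity) (abs_nonneg _), mul_rpow hη.le (sqrt_nonneg _), sqrt_eq_rpow,
      ← rpow_mul hlam.le, one_div_mul_eq_div]
  unfold ggd
  rw [log_mul (by positivity) (exp_ne_zero _), log_mul (ggd_normalizer_pos hν).ne' (sqrt_pos.mpr hlam).ne', log_exp,
    log_sqrt hlam.le, hpow]
  ring

theorem log_prod_ggd {ι : Type*} [Fintype ι] (hν : 0 < ν) {lam : ℝ} (hlam : 0 < lam)
    (θ : ι → ℝ) :
    log (∏ i, ggd ν lam (θ i)) = Fintype.card ι * log (ν * ggdEta ν / (2 * Gamma (1 / ν))) +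
      Fintype.card ι / 2 * log lam - ggdEta ν ^ ν * (∑ i, |θ i| ^ ν) * lam ^ (ν / 2) := by
  rw [log_prod fun i _ => (ggd_pos hν hlam (θ i)).ne']
  simp only [log_ggd hν hlam, Finset.sum_sub_distrib, Finset.sum_add_distrib, Finset.sum_const,
    Finset.card_univ, nsmul_eq_mul, ← Finset.mul_sum]
  ring

theorem rpow_two_div_div_eq (hν : 0 < ν) {A η S : ℝ} (hA : 0 ≤ A) (hη : 0 ≤ η) (hS : 0 ≤ S) :
    A ^ (2 / ν) / (ν ^ (2 / ν) * η ^ 2 * S ^ (2 / ν)) = (A / (ν * η ^ ν * S)) ^ (2 / ν) := by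
  rw [div_rpow hA (by positivity), mul_rpow (by positivity) hS, mul_rpow hν.le (by positivity),
    ← rpow_mul hη, mul_div_cancel₀ _ hν.ne', rpow_two]

end GeneralizedGaussian

theorem ggd_scale_mml_estimator_general
    (ν : ℝ) (hν : 0 < ν) (d : ℕ) (θ : Fin d → ℝ)
    (S : ℝ) (hS : S = ∑ i, |θ i| ^ ν) (hSpos : 0 < S)
    (Ψ : ℝ → ℝ)
    (hΨ : ∀ lam : ℝ, 0 < lam →
      Ψ lam = 1 / 2 * Real.log (ν * (d : ℝ) / 4) - Real.log lam -
        Real.log (∏ i, ggd ν lam (θ i)))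
    (lamstar : ℝ)
    (hlamstar : lamstar = ((d : ℝ) + 2) ^ (2 / ν) /
      (ν ^ (2 / ν) * ggdEta ν ^ 2 * S ^ (2 / ν))) :
    0 < lamstar ∧
    (∀ lam : ℝ, 0 < lam → lam ≠ lamstar → Ψ lamstar < Ψ lam) ∧
    deriv (deriv Ψ) lamstar = ν * ((d : ℝ) + 2) / (4 * lamstar ^ 2) := by
  have hη := ggdEta_pos hν
  set K := 1 / 2 * log (ν * d / 4) - d * log (ν * ggdEta ν / (2 * Gamma (1 / ν)))
  have hΨ_eq : ∀ lam, 0 < lam →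
      Ψ lam = K - ((d : ℝ) / 2 + 1) * log lam + ggdEta ν ^ ν * S * lam ^ (ν / 2) := by
    intro lam hlam
    rw [hΨ lam hlam, log_prod_ggd hν hlam, Fintype.card_fin, ← hS]
    ring
  set X := ((d : ℝ) + 2) / (ν * ggdEta ν ^ ν * S) with hX_def
  have hX : 0 < X := by positivity
  rw [rpow_two_div_div_eq hν (by positivity) hη.le hSpos.le] at hlamstar
  have hpos : 0 < lamstar := hlamstar ▸ rpow_pos_of_pos hX _
  have hcrit : ggdEta ν ^ ν * S * (ν / 2) * lamstar ^ (ν / 2) = (d : ℝ) / 2 + 1 := by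
    rw [hlamstar, ← rpow_mul hX.le, show 2 / ν * (ν / 2) = 1 by field_simp, rpow_one, hX_def]
    field_simp [(rpow_pos_of_pos hη ν).ne']
  refine ⟨hpos, fun lam hlam hne => ?_, ?_⟩
  · rw [hΨ_eq lam hlam, hΨ_eq lamstar hpos]
    exact log_rpow_potential_lt (by positivity) (by positivity) hpos hcrit K hlam hne
  · rw [deriv_deriv_log_rpow_potential hΨ_eq hpos hcrit]
    ring

/-- `Ψ(λ) = (1/2) log(νd/4) − log λ − log π(θ|λ)` attains a unique global minimum on `(0,∞)`
at `λ* = (d+2)^{2/ν}/(ν^{2/ν} η(ν)² S^{2/ν})` where `S = Σᵢ |θᵢ|^ν > 0`, and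
`Ψ''(λ*) = ν(d+2)/(4 λ*²)`. -/
theorem ggd_scale_mml_estimator
    (ν : ℝ) (hν : 0 < ν) (d : ℕ) (hd : 1 ≤ d) (θ : Fin d → ℝ)
    (S : ℝ) (hS : S = ∑ i, |θ i| ^ ν) (hSpos : 0 < S)
    (Ψ : ℝ → ℝ)
    (hΨ : ∀ lam : ℝ, 0 < lam →
      Ψ lam = 1 / 2 * Real.log (ν * (d : ℝ) / 4) - Real.log lam -
        Real.log (∏ i, ggd ν lam (θ i)))
    (lamstar : ℝ)
    (hlamstar : lamstar = ((d : ℝ) + 2) ^ (2 / ν) /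
      (ν ^ (2 / ν) * ggdEta ν ^ 2 * S ^ (2 / ν))) :
    0 < lamstar ∧
    (∀ lam : ℝ, 0 < lam → lam ≠ lamstar → Ψ lamstar < Ψ lam) ∧
    deriv (deriv Ψ) lamstar = ν * ((d : ℝ) + 2) / (4 * lamstar ^ 2) :=
  ggd_scale_mml_estimator_general ν hν d θ S hS hSpos Ψ hΨ lamstar hlamstar
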